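/- arXiv:1808.01810 — 3 statements merged into one kernel-verified Lean document; each statement's English description precedes it below -/
import Mathlib

section
/- For positive semidefinite matrices, if Q ⪯ P·I for each k and n_r = total dimension, then log det(I + Σ_k H_k^H (P/n_r) H_k) ≥ log det(I + Σ_k P H_k^H H_k) − n_t · log(n_r), where H_k are n_{r,k} × n_t complex matrices and P > 0. -/
/-!
Write `S = ∑ k, (H k)ᴴ * H k`, a positive semidefinite matrix, and `n = n_r ≥ 1`. Then
`n • (1 + (P / n) • S) = (1 + P • S) + (n - 1) • 1`, and adding a nonnegative multiple of
the identity to a positive semidefinite matrix shifts all its eigenvalues up, so it can only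
increase the determinant. Hence `det (1 + P • S) ≤ n ^ n_t * det (1 + (P / n) • S)`;
take `logb 2`.
-/

open Matrix BigOperators ComplexOrder

namespace Matrix

variable {𝕜 n : Type*} [RCLike 𝕜] [Fintype n] [DecidableEq n]

lemma IsHermitian.det_add_smul_one {A : Matrix n n 𝕜} (hA : A.IsHermitian) (c : ℝ) :
    (A + (c : 𝕜) • 1).det = ∏ i, ((hA.eigenvalues i + c : ℝ) : 𝕜) := by
  have hshift : A + (c : 𝕜) • 1 = Unitary.conjStarAlgAut 𝕜 _ hA.eigenvectorUnitary
      (diagonal (RCLike.ofReal ∘ fun i ↦ hA.eigenvalues i + c)) := by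
    conv_lhs => rw [hA.spectral_theorem]
    rw [← map_one (Unitary.conjStarAlgAut 𝕜 _ hA.eigenvectorUnitary), ← map_smul, ← map_add,
      smul_one_eq_diagonal, diagonal_add]
    congr 2
    ext i
    simp
  rw [hshift, Unitary.conjStarAlgAut_apply, det_mul_comm, ← mul_assoc]
  simp [det_diagonal]

lemma PosSemidef.re_det_le_re_det_add_smul_one {A : Matrix n n 𝕜} (hA : A.PosSemidef) {c : ℝ}
    (hc : 0 ≤ c) : RCLike.re A.det ≤ RCLike.re (A + (c : 𝕜) • 1).det := by
  rw [hA.isHermitian.det_add_smul_one, hA.isHermitian.det_eq_prod_eigenvalues]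
  simp only [← RCLike.ofReal_prod, RCLike.ofReal_re]
  exact Finset.prod_le_prod (fun i _ ↦ hA.eigenvalues_nonneg i)
    (fun i _ ↦ le_add_of_nonneg_right hc)

lemma PosSemidef.re_det_one_add_pos {A : Matrix n n 𝕜} (hA : A.PosSemidef) :
    0 < RCLike.re (1 + A).det :=
  (RCLike.pos_iff.mp (PosDef.one.add_posSemidef hA).det_pos).1

lemma PosSemidef.re_det_one_add_smul_le {A : Matrix n n 𝕜} (hA : A.PosSemidef) {c : ℝ}
    (hc : 1 ≤ c) :
    RCLike.re (1 + (c : 𝕜) • A).det ≤ c ^ Fintype.card n * RCLike.re (1 + A).det := by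
  have hsplit : (c : 𝕜) • (1 + A) = (1 + (c : 𝕜) • A) + ((c - 1 : ℝ) : 𝕜) • 1 := by
    rw [RCLike.ofReal_sub, RCLike.ofReal_one, sub_smul, one_smul, smul_add]
    abel
  have hcA : (1 + c • A).PosSemidef := PosSemidef.one.add (hA.smul (by linarith))
  have hmono := hcA.re_det_le_re_det_add_smul_one (sub_nonneg.mpr hc)
  rwa [RCLike.real_smul_eq_coe_smul (K := 𝕜), ← hsplit, det_smul, ← RCLike.ofReal_pow,
    RCLike.re_ofReal_mul] at hmono

end Matrix

theorem stmt_0_general (K nt : ℕ) (nrk : Fin K → ℕ)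
    (H : ∀ k : Fin K, Matrix (Fin (nrk k)) (Fin nt) ℂ)
    (P : ℝ) (hP : 0 < P)
    (nr : ℕ) (hnrpos : 0 < nr) :
    Real.logb 2 ((1 + ∑ k : Fin K, ((P / nr : ℝ) : ℂ) • ((H k)ᴴ * H k)).det.re)
      ≥ Real.logb 2 ((1 + ∑ k : Fin K, (P : ℂ) • ((H k)ᴴ * H k)).det.re)
        - (nt : ℝ) * Real.logb 2 (nr : ℝ) := by
  set S := ∑ k : Fin K, (H k)ᴴ * H k
  have hS : S.PosSemidef := posSemidef_sum _ fun k _ ↦ posSemidef_conjTranspose_mul_self (H k)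
  have hn : (1 : ℝ) ≤ nr := by exact_mod_cast hnrpos
  have hscaled : (((P / nr : ℝ) : ℂ) • S).PosSemidef :=
    hS.smul (Complex.zero_le_real.mpr (by positivity))
  have hPS : (P : ℂ) • S = ((nr : ℝ) : ℂ) • (((P / nr : ℝ) : ℂ) • S) := by
    rw [smul_smul, ← Complex.ofReal_mul, mul_div_cancel₀ _ (by positivity)]
  have hdet :
      (1 + (P : ℂ) • S).det.re ≤ (nr : ℝ) ^ nt * (1 + ((P / nr : ℝ) : ℂ) • S).det.re := by
    have h := hscaled.re_det_one_add_smul_le hn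
    simp only [Fintype.card_fin, RCLike.re_to_complex] at h
    rw [hPS]
    exact h
  have hA : 0 < (1 + ((P / nr : ℝ) : ℂ) • S).det.re := hscaled.re_det_one_add_pos
  have hB : 0 < (1 + (P : ℂ) • S).det.re :=
    (hS.smul (Complex.zero_le_real.mpr hP.le)).re_det_one_add_pos
  simp only [← Finset.smul_sum, ge_iff_le, sub_le_iff_le_add]
  calc Real.logb 2 (1 + (P : ℂ) • S).det.re
      ≤ Real.logb 2 ((nr : ℝ) ^ nt * (1 + ((P / nr : ℝ) : ℂ) • S).det.re) :=
        Real.logb_le_logb_of_le one_lt_two hB hdet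
    _ = Real.logb 2 (1 + ((P / nr : ℝ) : ℂ) • S).det.re + nt * Real.logb 2 nr := by
        rw [Real.logb_mul (by positivity) hA.ne', Real.logb_pow]
        ring

/-- Power scaling loses at most `n_t * log n_r` bits in the log-det capacity. -/
theorem stmt_0 (K nt : ℕ) (nrk : Fin K → ℕ)
    (H : ∀ k : Fin K, Matrix (Fin (nrk k)) (Fin nt) ℂ)
    (Q : ∀ k : Fin K, Matrix (Fin nt) (Fin nt) ℂ)
    (P : ℝ) (hP : 0 < P)
    (hQ : ∀ k : Fin K, (((P : ℂ) • (1 : Matrix (Fin nt) (Fin nt) ℂ)) - Q k).PosSemidef)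
    (nr : ℕ) (hnr : nr = ∑ k : Fin K, nrk k) (hnrpos : 0 < nr) :
    Real.logb 2 ((1 + ∑ k : Fin K, ((P / nr : ℝ) : ℂ) • ((H k)ᴴ * H k)).det.re)
      ≥ Real.logb 2 ((1 + ∑ k : Fin K, (P : ℂ) • ((H k)ᴴ * H k)).det.re)
        - (nt : ℝ) * Real.logb 2 (nr : ℝ) :=
  stmt_0_general K nt nrk H P hP nr hnrpos
end

section
/- Let f, g ∈ ℂ, and let Q be a 2×2 Hermitian positive semidefinite matrix with eigen-decomposition Q = U diag(λ, μ) U^H where U = [[u, v],[ṽ, ũ]] is unitary with |u|² = |ũ|² = 1 − |v|² = 1 − |ṽ|², and λ ≥ μ ≥ 0. Let h₂ = [f, g] (a row vector). Then Q(1,1)/(1 + h₂ Q h₂^H) ≤ 2·min{ 2/|f|² + 2(|g|²/|f|²)·λ, λ }. -/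
/-!
Conjugating by `U`, `Q(1,1) = λ|u|² + μ|v|²` and `h₂ Q h₂ᴴ = λ|fu + gṽ|² + μ|fv + gũ|²`.
As `|u|² + |v|² = 1`, the numerator is at most `λ`, which gives the second bound.
For the first, `|f|²|u|² ≤ 2|fu + gṽ|² + 2|g|²|ṽ|²` and likewise for `v` and `ũ`; weighting by
`λ ≥ μ ≥ 0` and using `|ṽ|² + |ũ|² = 1` yields `|f|² Q(1,1) ≤ 2 h₂ Q h₂ᴴ + 2|g|²λ`.
-/

open Matrix

lemma Complex.re_mul_ofReal_mul_conj (z : ℂ) (r : ℝ) :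
    (z * r * starRingEnd ℂ z).re = r * ‖z‖ ^ 2 := by
  rw [mul_right_comm, Complex.mul_conj, ← Complex.sq_norm, ← Complex.ofReal_mul,
    Complex.ofReal_re, mul_comm]

section DiagonalConjugation

variable {n : Type*} [Fintype n] [DecidableEq n] (U : Matrix n n ℂ) (d : n → ℝ)

lemma mul_diagonal_mul_conjTranspose_apply_self_re (i : n) :
    ((U * diagonal (fun j => (d j : ℂ)) * Uᴴ) i i).re = ∑ j, d j * ‖U i j‖ ^ 2 := by
  rw [mul_apply]
  simp only [mul_diagonal, conjTranspose_apply, Complex.re_sum, RCLike.star_def,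
    Complex.re_mul_ofReal_mul_conj]

lemma vecMul_mul_diagonal_mul_conjTranspose_dotProduct_star_re (h : n → ℂ) :
    (h ᵥ* (U * diagonal (fun j => (d j : ℂ)) * Uᴴ) ⬝ᵥ star h).re
      = ∑ j, d j * ‖(h ᵥ* U) j‖ ^ 2 := by
  rw [← vecMul_vecMul, ← dotProduct_mulVec, ← star_vecMul, ← vecMul_vecMul]
  simp only [dotProduct, vecMul_diagonal, Pi.star_apply, RCLike.star_def, Complex.re_sum,
    Complex.re_mul_ofReal_mul_conj]

end DiagonalConjugation

lemma norm_sq_le_two_mul_norm_add_sq_add {E : Type*} [SeminormedAddCommGroup E] (x y : E) :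
    ‖x‖ ^ 2 ≤ 2 * ‖x + y‖ ^ 2 + 2 * ‖y‖ ^ 2 := by
  have h : ‖x‖ ≤ ‖x + y‖ + ‖y‖ := by simpa using norm_le_norm_add_norm_sub' x (x + y)
  calc ‖x‖ ^ 2 ≤ (‖x + y‖ + ‖y‖) ^ 2 := by gcongr
    _ ≤ 2 * ‖x + y‖ ^ 2 + 2 * ‖y‖ ^ 2 := by linarith [add_sq_le (a := ‖x + y‖) (b := ‖y‖)]

lemma norm_sq_mul_norm_sq_le {𝕜 : Type*} [NormedDivisionRing 𝕜] {f u g w : 𝕜} :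
    ‖f‖ ^ 2 * ‖u‖ ^ 2 ≤ 2 * ‖f * u + g * w‖ ^ 2 + 2 * (‖g‖ ^ 2 * ‖w‖ ^ 2) := by
  simpa only [norm_mul, mul_pow] using norm_sq_le_two_mul_norm_add_sq_add (f * u) (g * w)

lemma mul_weighted_sum_le {lam mu F G a b a' b' p r : ℝ} (hmu : 0 ≤ mu) (hlm : mu ≤ lam)
    (hG : 0 ≤ G) (ha' : 0 ≤ a') (hab' : a' + b' ≤ 1)
    (hp : F * a ≤ 2 * p + 2 * (G * b')) (hr : F * b ≤ 2 * r + 2 * (G * a')) :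
    F * (lam * a + mu * b) ≤ 2 * (lam * p + mu * r) + 2 * (G * lam) := by
  have hlam : 0 ≤ lam := hmu.trans hlm
  have hmix : lam * b' + mu * a' ≤ lam := by nlinarith
  nlinarith [mul_le_mul_of_nonneg_left hp hlam, mul_le_mul_of_nonneg_left hr hmu,
    mul_le_mul_of_nonneg_left hmix hG]

lemma div_one_add_le_of_mul_le {x s F G lam : ℝ} (hF : 0 < F) (hs : 0 ≤ s)
    (hGlam : 0 ≤ G * lam) (h : F * x ≤ 2 * s + 2 * (G * lam)) :
    x / (1 + s) ≤ 2 / F + 2 * (G / F) * lam := by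
  rw [div_le_iff₀ (by linarith),
    show (2 / F + 2 * (G / F) * lam) * (1 + s) = (2 + 2 * (G * lam)) * (1 + s) / F by ring,
    le_div_iff₀ hF]
  nlinarith [mul_nonneg hGlam hs]

lemma weighted_sum_le_of_add_eq_one {lam mu a b : ℝ} (hlm : mu ≤ lam) (hb : 0 ≤ b)
    (hab : a + b = 1) : lam * a + mu * b ≤ lam :=
  calc lam * a + mu * b = lam - (lam - mu) * b := by linear_combination lam * hab
    _ ≤ lam := sub_le_self _ (mul_nonneg (sub_nonneg.2 hlm) hb)

theorem stmt_2_general (f g u v vt ut : ℂ) (lam mu : ℝ)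
    (hf : f ≠ 0)
    (hlm : lam ≥ mu) (hmu : mu ≥ 0)
    (U : Matrix (Fin 2) (Fin 2) ℂ) (hUdef : U = !![u, v; vt, ut])
    (huut : ‖u‖ ^ 2 = ‖ut‖ ^ 2)
    (huv : ‖u‖ ^ 2 = 1 - ‖vt‖ ^ 2)
    (huv' : ‖u‖ ^ 2 = 1 - ‖v‖ ^ 2)
    (Q : Matrix (Fin 2) (Fin 2) ℂ)
    (hQ : Q = U * Matrix.diagonal (fun i => ((![lam, mu] i : ℝ) : ℂ)) * Uᴴ)
    (h₂ : Fin 2 → ℂ) (hh₂ : h₂ = ![f, g]) :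
    (Q 0 0).re / (1 + ((Matrix.vecMul h₂ Q) ⬝ᵥ fun i => starRingEnd ℂ (h₂ i)).re)
      ≤ 2 * min (2 / ‖f‖ ^ 2 + 2 * (‖g‖ ^ 2 / ‖f‖ ^ 2) * lam) lam := by
  subst hUdef hh₂ hQ
  rw [show (fun i => starRingEnd ℂ (![f, g] i)) = star ![f, g] from rfl,
    mul_diagonal_mul_conjTranspose_apply_self_re,
    vecMul_mul_diagonal_mul_conjTranspose_dotProduct_star_re]
  simp only [Fin.sum_univ_two, Fin.isValue, of_apply, cons_val', cons_val_fin_one, cons_val_zero,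
    cons_val_one, vecMul_cons, head_cons, smul_cons, smul_eq_mul, smul_empty, tail_cons,
    empty_vecMul, add_zero, Pi.add_apply]
  have hlam : 0 ≤ lam := hmu.trans hlm
  have hS : 0 ≤ lam * ‖f * u + g * vt‖ ^ 2 + mu * ‖f * v + g * ut‖ ^ 2 := by positivity
  refine (le_min ?_ ?_).trans (le_mul_of_one_le_left (le_min (by positivity) hlam) one_le_two)
  · refine div_one_add_le_of_mul_le (by positivity) hS (by positivity) ?_
    exact mul_weighted_sum_le hmu hlm (by positivity) (by positivity) (by linarith)
      norm_sq_mul_norm_sq_le norm_sq_mul_norm_sq_le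
  · exact (div_le_self (by positivity) (by linarith)).trans
      (weighted_sum_le_of_add_eq_one hlm (by positivity) (by linarith))

/-- Upper bound on `Q(1,1) / (1 + h₂ Q h₂ᴴ)` for a 2×2 PSD matrix with
eigen-decomposition `Q = U diag(λ, μ) Uᴴ` (Lemma 3, first part). -/
theorem stmt_2 (f g u v vt ut : ℂ) (lam mu : ℝ)
    (hf : f ≠ 0)
    (hlm : lam ≥ mu) (hmu : mu ≥ 0)
    (U : Matrix (Fin 2) (Fin 2) ℂ) (hUdef : U = !![u, v; vt, ut])
    (hU : Uᴴ * U = 1)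
    (huut : ‖u‖ ^ 2 = ‖ut‖ ^ 2)
    (huv : ‖u‖ ^ 2 = 1 - ‖vt‖ ^ 2)
    (huv' : ‖u‖ ^ 2 = 1 - ‖v‖ ^ 2)
    (Q : Matrix (Fin 2) (Fin 2) ℂ)
    (hQ : Q = U * Matrix.diagonal (fun i => ((![lam, mu] i : ℝ) : ℂ)) * Uᴴ)
    (h₂ : Fin 2 → ℂ) (hh₂ : h₂ = ![f, g]) :
    (Q 0 0).re / (1 + ((Matrix.vecMul h₂ Q) ⬝ᵥ fun i => starRingEnd ℂ (h₂ i)).re)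
      ≤ 2 * min (2 / ‖f‖ ^ 2 + 2 * (‖g‖ ^ 2 / ‖f‖ ^ 2) * lam) lam :=
  stmt_2_general f g u v vt ut lam mu hf hlm hmu U hUdef huut huv huv' Q hQ h₂ hh₂
end

section
/- Bounded improvement of resource sharing (key inequality): Let λ_1,…,λ_N > 0 with Σ_i λ_i = 1, and P_1,…,P_N ≥ 0 with P_s := Σ_i λ_i P_i. Define μ_i = 1 if P_i ≤ P_s and μ_i = P_s/P_i otherwise. Then Σ_{i=1}^{N} λ_i / μ_i ≤ 2 and hence Σ_i λ_i log(1/μ_i) ≤ log 2 = 1 by concavity of log. -/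
open BigOperators

/- With `Pₛ = Σ λᵢ Pᵢ`, each term satisfies `λᵢ / μᵢ ≤ λᵢ + λᵢ Pᵢ / Pₛ` (it equals `λᵢ` when
`μᵢ = 1` and `λᵢ Pᵢ / Pₛ` otherwise), and the right-hand sides sum to at most `1 + Pₛ / Pₛ ≤ 2`.
The logarithmic bound then follows from Jensen's inequality for the concave `log₂`. -/

section ResourceSharing

variable {ι : Type*} (s : Finset ι) {lam Pw μ : ι → ℝ} {Ps : ℝ}

lemma div_le_add_mul_div_of_resourceShare {l p m q : ℝ} (hl : 0 ≤ l) (hp : 0 ≤ p) (hq : 0 ≤ q)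
    (hm1 : p ≤ q → m = 1) (hm2 : q < p → m = q / p) :
    l / m ≤ l + l * p / q := by
  rcases le_or_gt p q with hpq | hqp
  · rw [hm1 hpq, div_one]
    exact le_add_of_nonneg_right (by positivity)
  · rw [hm2 hqp, div_div_eq_mul_div]
    exact le_add_of_nonneg_left hl

/-- The junk value `x / 0 = 0` makes the pointwise bound hold even when `Ps = 0`. -/
theorem sum_div_le_two_of_resourceShare (hlam : ∀ i ∈ s, 0 ≤ lam i) (hsum : ∑ i ∈ s, lam i = 1)
    (hPw : ∀ i ∈ s, 0 ≤ Pw i) (hPs : Ps = ∑ i ∈ s, lam i * Pw i)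
    (hμ1 : ∀ i ∈ s, Pw i ≤ Ps → μ i = 1) (hμ2 : ∀ i ∈ s, Ps < Pw i → μ i = Ps / Pw i) :
    ∑ i ∈ s, lam i / μ i ≤ 2 := by
  have hPs_nonneg : 0 ≤ Ps := hPs ▸ Finset.sum_nonneg fun i hi => mul_nonneg (hlam i hi) (hPw i hi)
  calc ∑ i ∈ s, lam i / μ i ≤ ∑ i ∈ s, (lam i + lam i * Pw i / Ps) :=
        Finset.sum_le_sum fun i hi => div_le_add_mul_div_of_resourceShare (hlam i hi) (hPw i hi)
          hPs_nonneg (hμ1 i hi) (hμ2 i hi)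
    _ = 1 + Ps / Ps := by rw [Finset.sum_add_distrib, hsum, ← Finset.sum_div, hPs]
    _ ≤ 2 := by linarith [div_self_le_one Ps]

theorem pos_of_resourceShare (hlam : ∀ i ∈ s, 0 ≤ lam i) (hPw : ∀ i ∈ s, 0 ≤ Pw i)
    (hPs : Ps = ∑ i ∈ s, lam i * Pw i) {i : ι} (hi : i ∈ s) (hlam_i : 0 < lam i)
    (hμ1 : Pw i ≤ Ps → μ i = 1) (hμ2 : Ps < Pw i → μ i = Ps / Pw i) :
    0 < μ i := by
  rcases le_or_gt (Pw i) Ps with hle | hlt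
  · rw [hμ1 hle]
    exact one_pos
  · have hPw_pos : 0 < Pw i :=
      lt_of_le_of_lt (hPs ▸ Finset.sum_nonneg fun j hj => mul_nonneg (hlam j hj) (hPw j hj)) hlt
    have hPs_pos : 0 < Ps := calc
      0 < lam i * Pw i := mul_pos hlam_i hPw_pos
      _ ≤ Ps := hPs ▸ Finset.single_le_sum (fun j hj => mul_nonneg (hlam j hj) (hPw j hj)) hi
    rw [hμ2 hlt]
    exact div_pos hPs_pos hPw_pos

end ResourceSharing

theorem Real.sum_mul_logb_le_logb_of_sum_mul_le {ι : Type*} (s : Finset ι) {w x : ι → ℝ}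
    {b y : ℝ} (hb : 1 < b) (hw : ∀ i ∈ s, 0 ≤ w i) (hsum : ∑ i ∈ s, w i = 1)
    (hx : ∀ i ∈ s, 0 < x i) (hy : ∑ i ∈ s, w i * x i ≤ y) :
    ∑ i ∈ s, w i * Real.logb b (x i) ≤ Real.logb b y := by
  have hconcave : ConcaveOn ℝ (Set.Ioi 0) fun x => Real.log x / Real.log b := by
    simpa only [smul_eq_mul, div_eq_inv_mul] using
      strictConcaveOn_log_Ioi.concaveOn.smul (inv_nonneg.mpr (Real.log_pos hb).le)
  have hjensen := hconcave.le_map_sum hw hsum hx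
  have hmean_pos : 0 < ∑ i ∈ s, w i * x i := by
    obtain ⟨j, hj, hwj⟩ := Finset.exists_ne_zero_of_sum_ne_zero (hsum ▸ one_ne_zero)
    exact Finset.sum_pos' (fun i hi => mul_nonneg (hw i hi) (hx i hi).le)
      ⟨j, hj, mul_pos ((hw j hj).lt_of_ne' hwj) (hx j hj)⟩
  exact hjensen.trans (Real.logb_le_logb_of_le hb hmean_pos hy)

/-- Key estimate for the bounded improvement of resource sharing (Lemma 2):
`Σ λᵢ/μᵢ ≤ 2` and hence `Σ λᵢ log₂(1/μᵢ) ≤ 1`. -/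
theorem stmt_18 (N : ℕ) (lam : Fin N → ℝ) (Pw : Fin N → ℝ)
    (hlam : ∀ i, 0 < lam i) (hsum : ∑ i, lam i = 1)
    (hPw : ∀ i, 0 ≤ Pw i)
    (Ps : ℝ) (hPs : Ps = ∑ i, lam i * Pw i)
    (μ : Fin N → ℝ)
    (hμ1 : ∀ i, Pw i ≤ Ps → μ i = 1)
    (hμ2 : ∀ i, Ps < Pw i → μ i = Ps / Pw i) :
    (∑ i, lam i / μ i ≤ 2) ∧ (∑ i, lam i * Real.logb 2 (1 / μ i) ≤ 1) := by
  have hlam' : ∀ i ∈ Finset.univ, 0 ≤ lam i := fun i _ => (hlam i).le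
  have hbound : ∑ i, lam i / μ i ≤ 2 :=
    sum_div_le_two_of_resourceShare _ hlam' hsum (fun i _ => hPw i) hPs
      (fun i _ => hμ1 i) (fun i _ => hμ2 i)
  have hμ_pos : ∀ i, 0 < μ i := fun i =>
    pos_of_resourceShare _ hlam' (fun i _ => hPw i) hPs (Finset.mem_univ i) (hlam i)
      (hμ1 i) (hμ2 i)
  refine ⟨hbound, ?_⟩
  calc ∑ i, lam i * Real.logb 2 (1 / μ i) ≤ Real.logb 2 2 :=
        Real.sum_mul_logb_le_logb_of_sum_mul_le _ one_lt_two hlam' hsum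
          (fun i _ => one_div_pos.mpr (hμ_pos i)) (by simpa only [mul_one_div] using hbound)
    _ = 1 := Real.logb_self_eq_one one_lt_two
end
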